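/- arXiv:2407.14536 — 4 statements merged into one kernel-verified Lean document; each statement's English description precedes it below -/
import Mathlib

section
/- Let G = (V, E) be a finite undirected graph, f a proper forest function on V, and F ⊆ E an edge set such that every connected component C of the graph (V, F) satisfies f(C) = 0. Then F is primal feasible for f: for every S ⊆ V with f(S) = 1, there exists an edge e ∈ F with exactly one endpoint in S. -/
/-- Let `G = (V, E)` be a finite undirected graph, `f` a proper
forest function on `V`, and `F ⊆ E` an edge set such that every connected
component of `(V, F)` satisfies `f C = 0`. Then `F` is primal feasible: for every
`S ⊆ V` with `f S = 1` there is an edge of `F` with exactly one endpoint in `S`. -/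
theorem inactive_components_primal_feasible {V : Type*} [Fintype V]
    (E : Finset (Sym2 V)) (hE : ∀ e ∈ E, ¬ e.IsDiag)
    (f : Set V → Fin 2)
    (hzero : f Set.univ = 0)
    (hsymm : ∀ S : Set V, f S = f Sᶜ)
    (hdisj : ∀ A B : Set V, Disjoint A B → f A = 0 → f B = 0 → f (A ∪ B) = 0)
    (F : Finset (Sym2 V)) (hFE : F ⊆ E)
    (hcomp : ∀ v : V,
      f {u | (SimpleGraph.fromEdgeSet (F : Set (Sym2 V))).Reachable v u} = 0) :
    ∀ S : Set V, f S = 1 → ∃ e ∈ F, ∃ u v : V, e = s(u, v) ∧ u ∈ S ∧ v ∉ S := by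
  classical
  intro S hS
  by_contra hno
  push_neg at hno
  set G := SimpleGraph.fromEdgeSet (F : Set (Sym2 V)) with hG
  have hadj : ∀ a b, G.Adj a b → (a ∈ S ↔ b ∈ S) := by
    intro a b hab
    rw [hG, SimpleGraph.fromEdgeSet_adj] at hab
    have h1 : s(a, b) ∈ F := by exact_mod_cast hab.1
    have h2 : s(b, a) ∈ F := by rw [Sym2.eq_swap]; exact h1
    constructor
    · intro ha
      by_contra hb
      exact hb (hno s(a, b) h1 a b rfl ha)
    · intro hb
      by_contra ha
      exact ha (hno s(b, a) h2 b a rfl hb)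
  have hreach : ∀ v u : V, G.Reachable v u → v ∈ S → u ∈ S := by
    intro v u h
    obtain ⟨w⟩ := h
    induction w with
    | nil => exact id
    | cons h p ih => intro hv; exact ih ((hadj _ _ h).mp hv)
  have hempty : f ∅ = 0 := by
    have h := hsymm ∅
    rw [Set.compl_empty] at h
    rw [h, hzero]
  have hunion : ∀ s : Finset V, f (⋃ v ∈ s, {u | G.Reachable v u}) = 0 := by
    intro s
    induction s using Finset.induction_on with
    | empty => simpa using hempty
    | @insert a s' ha ih =>
      rw [Finset.set_biUnion_insert]
      by_cases hc : ∃ v ∈ s', G.Reachable v a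
      · obtain ⟨v, hv, hva⟩ := hc
        have hsub : {u | G.Reachable a u} ⊆ ⋃ x ∈ s', {u | G.Reachable x u} := by
          intro u hu
          exact Set.mem_biUnion hv (hva.trans hu)
        rw [Set.union_eq_self_of_subset_left hsub]
        exact ih
      · push_neg at hc
        refine hdisj _ _ ?_ (hcomp a) ih
        rw [Set.disjoint_left]
        intro x hx hx'
        simp only [Set.mem_iUnion] at hx'
        obtain ⟨v, hv, hvx⟩ := hx'
        exact hc v hv (hvx.trans (Set.mem_setOf_eq ▸ hx).symm)
  have hSeq : S = ⋃ v ∈ Finset.univ.filter (· ∈ S), {u | G.Reachable v u} := by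
    ext x
    simp only [Set.mem_iUnion, Finset.mem_filter, Finset.mem_univ, true_and,
      Set.mem_setOf_eq]
    constructor
    · intro hx
      exact ⟨x, hx, SimpleGraph.Reachable.refl x⟩
    · rintro ⟨v, hv, hvx⟩
      exact hreach v x hvx hv
  have : f S = 0 := hSeq ▸ hunion _
  rw [hS] at this
  exact absurd this (by decide)
end

section
/- Equivalence of Facility Placement and Connection with Steiner Tree on the augmented graph: Let G = (V, E) be a finite undirected graph with edge costs c : E → ℕ, opening costs o : V → ℕ, and clients C ⊆ V. Let G' = (V ∪ {s}, E ∪ {{v, s} : v ∈ V}) for a new vertex s ∉ V, with edge costs c'(e) = c(e) for e ∈ E and c'({v, s}) = o(v) for v ∈ V. Then the minimum, over all pairs (O, F) with O ⊆ V and F ⊆ E such that every client u ∈ C is connected in (V, F) to some node of O, of Σ_{v ∈ O} o(v) + Σ_{e ∈ F} c(e), equals the minimum, over all edge sets F' of G' such that all nodes of C ∪ {s} lie in a single connected component of (V ∪ {s}, F'), of Σ_{e ∈ F'} c'(e). -/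
/-- Equivalence of Facility Placement and Connection with
Steiner Tree on the augmented graph: the minimum cost of opening facilities
`O ⊆ V` and buying edges `F ⊆ E` so that every client reaches an open facility
equals the minimum cost of an edge set `F'` of the augmented graph `G'`
(obtained by adding a new vertex `s = none` joined to every `v ∈ V` by an edge
of cost `o v`) that puts all of `C ∪ {s}` into a single connected component. -/
theorem fpc_eq_steinerTree_augmented {V : Type*} [Fintype V] [DecidableEq V]
    (E : Finset (Sym2 V)) (hE : ∀ e ∈ E, ¬ e.IsDiag)
    (c : Sym2 V → ℕ) (o : V → ℕ) (Cl : Finset V)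
    (E' : Finset (Sym2 (Option V)))
    (hE' : E' = E.image (Sym2.map some) ∪
      Finset.univ.image (fun v : V => s((none : Option V), (some v : Option V))))
    (c' : Sym2 (Option V) → ℕ)
    (hc'map : ∀ e ∈ E, c' (Sym2.map some e) = c e)
    (hc'star : ∀ v : V, c' s((none : Option V), (some v : Option V)) = o v) :
    sInf {n : ℕ | ∃ O : Finset V, ∃ F : Finset (Sym2 V), F ⊆ E ∧
        (∀ u ∈ Cl, ∃ w ∈ O,
          (SimpleGraph.fromEdgeSet (F : Set (Sym2 V))).Reachable u w) ∧
        n = ∑ v ∈ O, o v + ∑ e ∈ F, c e} =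
      sInf {n : ℕ | ∃ F' : Finset (Sym2 (Option V)), F' ⊆ E' ∧
        (∀ x ∈ insert (none : Option V) (Cl.image some),
          ∀ y ∈ insert (none : Option V) (Cl.image some),
            (SimpleGraph.fromEdgeSet (F' : Set (Sym2 (Option V)))).Reachable x y) ∧
        n = ∑ e ∈ F', c' e} := by
  have injm : Function.Injective (Sym2.map (some : V → Option V)) :=
    Sym2.map.injective (Option.some_injective V)
  have injs : Function.Injective (fun v : V => s((none : Option V), (some v : Option V))) := by
    intro a b hab
    simpa using (Sym2.congr_right.mp hab)
  have nonemem : ∀ (e : Sym2 V), (none : Option V) ∉ Sym2.map some e := by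
    intro e hn
    rw [Sym2.mem_map] at hn
    obtain ⟨a, _, ha⟩ := hn
    exact Option.some_ne_none a ha
  congr 1
  ext n
  simp only [Set.mem_setOf_eq]
  constructor
  · rintro ⟨O, F, hFE, hconn, rfl⟩
    refine ⟨F.image (Sym2.map some) ∪ O.image (fun v => s((none : Option V), (some v : Option V))),
      ?_, ?_, ?_⟩
    · rw [hE']
      exact Finset.union_subset_union (Finset.image_subset_image hFE)
        (Finset.image_subset_image (Finset.subset_univ O))
    · -- connectivity
      have hreach : ∀ u ∈ Cl,
          (SimpleGraph.fromEdgeSet (((F.image (Sym2.map some) ∪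
            O.image (fun v => s((none : Option V), (some v : Option V)))) :
              Finset (Sym2 (Option V))) : Set (Sym2 (Option V)))).Reachable (some u) none := by
        intro u hu
        obtain ⟨w, hwO, hr⟩ := hconn u hu
        have hmap : ∀ {a b : V},
            (SimpleGraph.fromEdgeSet ((F : Finset (Sym2 V)) : Set (Sym2 V))).Adj a b →
            (SimpleGraph.fromEdgeSet (((F.image (Sym2.map some) ∪
              O.image (fun v => s((none : Option V), (some v : Option V)))) :
                Finset (Sym2 (Option V))) : Set (Sym2 (Option V)))).Adj (some a) (some b) := by
          intro a b hab
          rw [SimpleGraph.fromEdgeSet_adj] at hab ⊢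
          refine ⟨?_, fun h => hab.2 (Option.some_injective V h)⟩
          simp only [Finset.coe_union, Set.mem_union, Finset.coe_image, Set.mem_image]
          exact Or.inl ⟨s(a, b), by exact_mod_cast hab.1, by rw [Sym2.map_pair_eq]⟩
        have h1 : (SimpleGraph.fromEdgeSet (((F.image (Sym2.map some) ∪
            O.image (fun v => s((none : Option V), (some v : Option V)))) :
              Finset (Sym2 (Option V))) : Set (Sym2 (Option V)))).Reachable (some u) (some w) :=
          hr.map ⟨some, fun h => hmap h⟩
        have h2 : (SimpleGraph.fromEdgeSet (((F.image (Sym2.map some) ∪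
            O.image (fun v => s((none : Option V), (some v : Option V)))) :
              Finset (Sym2 (Option V))) : Set (Sym2 (Option V)))).Adj (some w) none := by
          rw [SimpleGraph.fromEdgeSet_adj]
          refine ⟨?_, by simp⟩
          simp only [Finset.coe_union, Set.mem_union, Finset.coe_image, Set.mem_image]
          exact Or.inr ⟨w, hwO, by rw [Sym2.eq_swap]⟩
        exact h1.trans h2.reachable
      intro x hx y hy
      have key : ∀ z ∈ insert (none : Option V) (Cl.image some),
          (SimpleGraph.fromEdgeSet (((F.image (Sym2.map some) ∪
            O.image (fun v => s((none : Option V), (some v : Option V)))) :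
              Finset (Sym2 (Option V))) : Set (Sym2 (Option V)))).Reachable z none := by
        intro z hz
        rcases Finset.mem_insert.mp hz with h | h
        · exact h ▸ SimpleGraph.Reachable.refl _
        · obtain ⟨u, hu, rfl⟩ := Finset.mem_image.mp h
          exact hreach u hu
      exact (key x hx).trans (key y hy).symm
    · -- cost
      have hdisj : Disjoint (F.image (Sym2.map some))
          (O.image (fun v => s((none : Option V), (some v : Option V)))) := by
        rw [Finset.disjoint_left]
        intro e he1 he2
        obtain ⟨a, _, rfl⟩ := Finset.mem_image.mp he1
        obtain ⟨v, _, hv⟩ := Finset.mem_image.mp he2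
        exact nonemem a (by rw [← hv]; exact Sym2.mem_mk_left _ _)
      rw [Finset.sum_union hdisj,
        Finset.sum_image (fun x _ y _ h => injm h),
        Finset.sum_image (fun x _ y _ h => injs h)]
      rw [Finset.sum_congr rfl (fun e he => hc'map e (hFE he)),
        Finset.sum_congr rfl (fun v _ => hc'star v)]
      ring
  · rintro ⟨F', hF'E, hconn, rfl⟩
    classical
    set F : Finset (Sym2 V) := E.filter (fun e => Sym2.map some e ∈ F') with hF
    set O : Finset V := Finset.univ.filter (fun v =>
      s((none : Option V), (some v : Option V)) ∈ F') with hO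
    -- decode adjacency in the augmented graph
    have decode : ∀ a b : V,
        (SimpleGraph.fromEdgeSet ((F' : Finset (Sym2 (Option V))) : Set (Sym2 (Option V)))).Adj
          (some a) (some b) →
        (SimpleGraph.fromEdgeSet ((F : Finset (Sym2 V)) : Set (Sym2 V))).Adj a b := by
      intro a b hab
      rw [SimpleGraph.fromEdgeSet_adj] at hab ⊢
      obtain ⟨hmem, hne⟩ := hab
      have hmem' : s((some a : Option V), (some b : Option V)) ∈ E' := hF'E (by exact_mod_cast hmem)
      rw [hE', Finset.mem_union] at hmem'
      rcases hmem' with h | h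
      · obtain ⟨e, heE, he⟩ := Finset.mem_image.mp h
        have : e = s(a, b) := injm (by rw [he, Sym2.map_pair_eq])
        subst this
        refine ⟨?_, fun h => hne (congrArg some h)⟩
        rw [hF]
        exact_mod_cast Finset.mem_filter.mpr ⟨heE, by rwa [Sym2.map_pair_eq]⟩
      · exfalso
        obtain ⟨v, _, hv⟩ := Finset.mem_image.mp h
        have : (none : Option V) ∈ s((some a : Option V), (some b : Option V)) := by
          rw [← hv]; exact Sym2.mem_mk_left _ _
        simp [Sym2.mem_iff] at this
    have decodeStar : ∀ a : V,
        (SimpleGraph.fromEdgeSet ((F' : Finset (Sym2 (Option V))) : Set (Sym2 (Option V)))).Adj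
          (some a) none → a ∈ O := by
      intro a hab
      rw [SimpleGraph.fromEdgeSet_adj] at hab
      rw [hO, Finset.mem_filter]
      refine ⟨Finset.mem_univ a, ?_⟩
      have := hab.1
      rw [Sym2.eq_swap] at this
      exact_mod_cast this
    refine ⟨O, F, Finset.filter_subset _ _, ?_, ?_⟩
    · -- connectivity
      intro u hu
      have hr : (SimpleGraph.fromEdgeSet
          ((F' : Finset (Sym2 (Option V))) : Set (Sym2 (Option V)))).Reachable (some u) none :=
        hconn (some u) (Finset.mem_insert_of_mem (Finset.mem_image_of_mem some hu))
          none (Finset.mem_insert_self _ _)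
      obtain ⟨p⟩ := hr
      -- invariant along the walk
      have walkind : ∀ {x y : Option V},
          (SimpleGraph.fromEdgeSet
            ((F' : Finset (Sym2 (Option V))) : Set (Sym2 (Option V)))).Walk x y →
          (x.rec (∃ w ∈ O, (SimpleGraph.fromEdgeSet ((F : Finset (Sym2 V)) :
              Set (Sym2 V))).Reachable u w)
            (fun v => (SimpleGraph.fromEdgeSet ((F : Finset (Sym2 V)) :
                Set (Sym2 V))).Reachable u v ∨
              ∃ w ∈ O, (SimpleGraph.fromEdgeSet ((F : Finset (Sym2 V)) :
                Set (Sym2 V))).Reachable u w) : Prop) →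
          (y.rec (∃ w ∈ O, (SimpleGraph.fromEdgeSet ((F : Finset (Sym2 V)) :
              Set (Sym2 V))).Reachable u w)
            (fun v => (SimpleGraph.fromEdgeSet ((F : Finset (Sym2 V)) :
                Set (Sym2 V))).Reachable u v ∨
              ∃ w ∈ O, (SimpleGraph.fromEdgeSet ((F : Finset (Sym2 V)) :
                Set (Sym2 V))).Reachable u w) : Prop) := by
        intro x y p
        induction p with
        | nil => exact id
        | @cons x z y hadj _ ih =>
          intro hx
          apply ih
          match x, z with
          | some a, some b =>
            have hab := decode a b hadj
            rcases hx with h | h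
            · exact Or.inl (h.trans hab.reachable)
            · exact Or.inr h
          | some a, none =>
            have haO := decodeStar a hadj
            rcases hx with h | h
            · exact ⟨a, haO, h⟩
            · exact h
          | none, some b =>
            have hbO := decodeStar b hadj.symm
            exact Or.inr hx
          | none, none => exact absurd rfl hadj.ne
      exact walkind p (Or.inl (SimpleGraph.Reachable.refl u))
    · -- cost
      have hF'eq : F' = F.image (Sym2.map some) ∪
          O.image (fun v => s((none : Option V), (some v : Option V))) := by
        ext e'
        constructor
        · intro he'
          have := hF'E he'
          rw [hE', Finset.mem_union] at this
          rcases this with h | h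
          · obtain ⟨e, heE, rfl⟩ := Finset.mem_image.mp h
            exact Finset.mem_union_left _ (Finset.mem_image_of_mem _
              (Finset.mem_filter.mpr ⟨heE, he'⟩))
          · obtain ⟨v, _, rfl⟩ := Finset.mem_image.mp h
            exact Finset.mem_union_right _ (Finset.mem_image_of_mem _
              (Finset.mem_filter.mpr ⟨Finset.mem_univ v, he'⟩))
        · intro he'
          rcases Finset.mem_union.mp he' with h | h
          · obtain ⟨e, heF, rfl⟩ := Finset.mem_image.mp h
            exact (Finset.mem_filter.mp heF).2
          · obtain ⟨v, hvO, rfl⟩ := Finset.mem_image.mp h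
            exact (Finset.mem_filter.mp hvO).2
      have hdisj : Disjoint (F.image (Sym2.map some))
          (O.image (fun v => s((none : Option V), (some v : Option V)))) := by
        rw [Finset.disjoint_left]
        intro e he1 he2
        obtain ⟨a, _, rfl⟩ := Finset.mem_image.mp he1
        obtain ⟨v, _, hv⟩ := Finset.mem_image.mp he2
        exact nonemem a (by rw [← hv]; exact Sym2.mem_mk_left _ _)
      rw [hF'eq, Finset.sum_union hdisj,
        Finset.sum_image (fun x _ y _ h => injm h),
        Finset.sum_image (fun x _ y _ h => injs h)]
      rw [Finset.sum_congr rfl (fun e he => hc'map e (Finset.filter_subset _ _ he)),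
        Finset.sum_congr rfl (fun v _ => hc'star v)]
      ring
end

section
/- Soundness of the randomized parity test for symmetric connection requests: Let V be a finite set, R a finite set of unordered pairs of distinct elements of V, and C ⊆ V a set such that some request {u, v} ∈ R has u ∈ C and v ∉ C. If c is drawn uniformly at random from the finite set of all functions R → ℤ/2ℤ (i.e., the bits c(r), r ∈ R, are independent fair coins), then the probability that the aggregated sum Σ_{u ∈ C} Σ_{v : {u,v} ∈ R} c({u, v}) equals 0 in ℤ/2ℤ is exactly 1/2. -/
/-! The aggregated value is additive in `c`, and the bit of a crossing request is counted exactly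
once, so the aggregated value is a surjective homomorphism onto `ℤ/2ℤ`. Its two fibres are cosets
of the kernel, hence equally large. -/

open Finset

theorem AddMonoidHom.card_ker_div_card_eq_half {G : Type*} [AddGroup G] [Fintype G]
    (f : G →+ ZMod 2) (hf : Function.Surjective f) :
    (#{g | f g = 0} : ℝ) / #(univ : Finset G) = 1 / 2 := by
  have hfiber : #{g | f g = 0} = #{g | f g = 1} :=
    card_fiber_eq_of_mem_range f (hf 0) (hf 1)
  have hsplit : #(univ : Finset G) = #{g | f g = 0} + #{g | f g = 1} := by
    rw [card_eq_sum_card_fiberwise (f := f) (t := univ) (fun _ _ => mem_univ _)]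
    rfl
  have hpos : 0 < #{g | f g = 0} := card_pos.2 ⟨0, by simp⟩
  rw [hsplit, ← hfiber]
  field_simp
  push_cast
  ring

section AggregatedValue

variable {V M : Type*} [DecidableEq V] [AddCommMonoid M]

def aggregatedValue (R : Finset (Sym2 V)) (C : Finset V) : ({e : Sym2 V // e ∈ R} → M) →+ M where
  toFun c := ∑ u ∈ C, ∑ e ∈ R.attach.filter (fun e => u ∈ e.1), c e
  map_zero' := by simp
  map_add' c d := by simp only [Pi.add_apply, sum_add_distrib]

theorem aggregatedValue_single_of_crossing {R : Finset (Sym2 V)} {C : Finset V} {u v : V}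
    (huv : s(u, v) ∈ R) (hu : u ∈ C) (hv : v ∉ C) (m : M) :
    aggregatedValue R C (Pi.single ⟨s(u, v), huv⟩ m) = m := by
  have hend : ∀ w ∈ C, w ∈ s(u, v) ↔ w = u := by
    intro w hw
    rw [Sym2.mem_iff, or_iff_left (by rintro rfl; exact hv hw)]
  calc aggregatedValue R C (Pi.single ⟨s(u, v), huv⟩ m)
      = ∑ w ∈ C, if w = u then m else 0 := by
        refine sum_congr rfl fun w hw => ?_
        simp only [sum_pi_single', mem_filter, mem_attach, true_and, hend w hw]
    _ = m := by rw [sum_ite_eq' C u, if_pos hu]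

end AggregatedValue

theorem parity_test_soundness_general {V : Type*} [DecidableEq V]
    (R : Finset (Sym2 V))
    (C : Finset V)
    (hcross : ∃ u v : V, s(u, v) ∈ R ∧ u ∈ C ∧ v ∉ C) :
    ((Finset.univ.filter (fun c : ({e : Sym2 V // e ∈ R} → ZMod 2) =>
          ∑ u ∈ C, ∑ e ∈ R.attach.filter (fun e => u ∈ e.1), c e = 0)).card : ℝ) /
        ((Finset.univ : Finset ({e : Sym2 V // e ∈ R} → ZMod 2)).card : ℝ) = 1 / 2 := by
  obtain ⟨u, v, huv, hu, hv⟩ := hcross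
  exact (aggregatedValue R C).card_ker_div_card_eq_half fun m =>
    ⟨_, aggregatedValue_single_of_crossing huv hu hv m⟩

/-- Soundness of the randomized parity test for symmetric
connection requests: if some request `{u, v} ∈ R` crosses the cut defined by
`C` (i.e. `u ∈ C`, `v ∉ C`), then for `c` drawn uniformly at random from all
functions `R → ℤ/2ℤ`, the probability that the aggregated sum
`Σ_{u ∈ C} Σ_{v : {u,v} ∈ R} c {u, v}` is `0` in `ℤ/2ℤ` is exactly `1/2`. -/
theorem parity_test_soundness {V : Type*} [Fintype V] [DecidableEq V]
    (R : Finset (Sym2 V)) (hR : ∀ e ∈ R, ¬ e.IsDiag)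
    (C : Finset V)
    (hcross : ∃ u v : V, s(u, v) ∈ R ∧ u ∈ C ∧ v ∉ C) :
    ((Finset.univ.filter (fun c : ({e : Sym2 V // e ∈ R} → ZMod 2) =>
          ∑ u ∈ C, ∑ e ∈ R.attach.filter (fun e => u ∈ e.1), c e = 0)).card : ℝ) /
        ((Finset.univ : Finset ({e : Sym2 V // e ∈ R} → ZMod 2)).card : ℝ) = 1 / 2 :=
  parity_test_soundness_general R C hcross
end

section
/- Correctness of the mod-s test for input components of equal size: Let s ≥ 2, let Λ_1, …, Λ_m be pairwise disjoint subsets of a finite set V, each of cardinality exactly s, and let C ⊆ V. For an assignment c : [m] → ℤ/sℤ define Σ_C(c) = Σ_{i=1}^m |Λ_i ∩ C| · c_i in ℤ/sℤ. Then: (i) if every Λ_i is either contained in C or disjoint from C, then Σ_C(c) = 0 for every assignment c; and (ii) if some i ∈ [m] satisfies 0 < |Λ_i ∩ C| < s, and the values c_1, …, c_m are independent and each uniform on {0, 1} ⊆ ℤ/sℤ, then the probability that Σ_C(c) = 0 is at most 1/2. -/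
/-!
If `0 < |Λ_i ∩ C| < s`, the coefficient of `c_i` is a nonzero element of `ℤ/sℤ`, so toggling
coin `i` always changes the sum. Toggling is an involution on assignments, hence it injects those
with sum `0` into those with nonzero sum, and at most half of all assignments have sum `0`.
-/

open Finset

section FlipArgument

variable {ι G : Type*} [DecidableEq ι]

def flipBit (i : ι) (b : ι → Bool) : ι → Bool := Function.update b i (!b i)

theorem flipBit_involutive (i : ι) : Function.Involutive (flipBit i) := by
  intro b
  simp [flipBit, Function.update_idem]

theorem sum_ite_update [Fintype ι] [AddCommMonoid G] (a : ι → G) (b : ι → Bool) (i : ι)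
    (x : Bool) :
    ∑ j, (if Function.update b i x j then a j else 0) =
      (if x then a i else 0) + ∑ j ∈ univ.erase i, if b j then a j else 0 := by
  rw [← add_sum_erase _ _ (mem_univ i), Function.update_self]
  congr 1
  refine sum_congr rfl fun j hj => ?_
  rw [Function.update_of_ne (ne_of_mem_erase hj)]

theorem eq_zero_of_sum_ite_flipBit_eq [Fintype ι] [AddCommGroup G] {a : ι → G} {b : ι → Bool}
    {i : ι} (h : ∑ j, (if flipBit i b j then a j else 0) = ∑ j, if b j then a j else 0) :
    a i = 0 := by
  conv_rhs at h => rw [← Function.update_eq_self i b]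
  rw [flipBit, sum_ite_update, sum_ite_update, add_left_inj] at h
  cases hb : b i <;>
    simp only [hb, Bool.not_false, Bool.not_true, if_true, if_false, Bool.false_eq_true] at h
  exacts [h, h.symm]

theorem two_mul_card_filter_sum_ite_eq_le [Fintype ι] [AddCommGroup G] [DecidableEq G]
    {a : ι → G} {i : ι} (hi : a i ≠ 0) (t : G) :
    2 * #{b : ι → Bool | ∑ j, (if b j then a j else 0) = t} ≤ Fintype.card (ι → Bool) := by
  set S := ({b : ι → Bool | ∑ j, (if b j then a j else 0) = t} : Finset _)
  have hflip : ∀ b ∈ S, flipBit i b ∈ Sᶜ := by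
    intro b hb
    rw [mem_compl]
    intro hflip
    simp only [S, mem_filter, mem_univ, true_and] at hb hflip
    exact hi (eq_zero_of_sum_ite_flipBit_eq (hflip.trans hb.symm))
  have hle := card_le_card_of_injOn _ hflip (flipBit_involutive i).injective.injOn
  rw [card_compl] at hle
  omega

end FlipArgument

theorem natCast_zmod_ne_zero_of_pos_of_lt {k s : ℕ} (hpos : 0 < k) (hlt : k < s) :
    (k : ZMod s) ≠ 0 := by
  rw [Ne, ZMod.natCast_eq_zero_iff]
  exact fun hdvd => (Nat.le_of_dvd hpos hdvd).not_gt hlt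

theorem card_inter_cast_eq_zero {V : Type*} [DecidableEq V] {Λ C : Finset V}
    (h : Λ ⊆ C ∨ Disjoint Λ C) : ((Λ ∩ C).card : ZMod Λ.card) = 0 := by
  rcases h with hsub | hdis
  · rw [inter_eq_left.mpr hsub, ZMod.natCast_self]
  · rw [disjoint_iff_inter_eq_empty.mp hdis, card_empty, Nat.cast_zero]

theorem mod_s_test_correctness_general {V : Type*} [DecidableEq V]
    (s : ℕ) (m : ℕ) (Λ : Fin m → Finset V)
    (hcard : ∀ i : Fin m, (Λ i).card = s)
    (C : Finset V) :
    ((∀ i : Fin m, Λ i ⊆ C ∨ Disjoint (Λ i) C) →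
      ∀ c : Fin m → ZMod s,
        ∑ i : Fin m, ((Λ i ∩ C).card : ZMod s) * c i = 0) ∧
    ((∃ i : Fin m, 0 < (Λ i ∩ C).card ∧ (Λ i ∩ C).card < s) →
      ((Finset.univ.filter (fun b : Fin m → Bool =>
            ∑ i : Fin m, ((Λ i ∩ C).card : ZMod s) * (if b i then 1 else 0) = 0)).card : ℝ) /
          ((Finset.univ : Finset (Fin m → Bool)).card : ℝ) ≤ 1 / 2) := by
  constructor
  · intro hclosed c
    refine sum_eq_zero fun i _ => ?_
    have hzero := card_inter_cast_eq_zero (hclosed i)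
    rw [hcard i] at hzero
    rw [hzero, zero_mul]
  · rintro ⟨i, hpos, hlt⟩
    have hbound := two_mul_card_filter_sum_ite_eq_le
      (a := fun j => ((Λ j ∩ C).card : ZMod s)) (natCast_zmod_ne_zero_of_pos_of_lt hpos hlt) 0
    simp only [mul_ite, mul_one, mul_zero, card_univ]
    rw [div_le_iff₀ (by positivity)]
    have hbound_real := (Nat.cast_le (α := ℝ)).mpr hbound
    push_cast at hbound_real
    linarith

/-- Correctness of the mod-`s` test for input components of
equal size `s ≥ 2`: (i) if every component `Λ i` is contained in `C` or disjoint
from `C`, the aggregated value `Σ_i |Λ i ∩ C| · c i` (in `ℤ/sℤ`) is `0` for every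
assignment `c`; (ii) if some `Λ i` is split by `C` (i.e. `0 < |Λ i ∩ C| < s`),
then for independent fair coins `c i ∈ {0, 1} ⊆ ℤ/sℤ` the probability that the
aggregated value is `0` is at most `1/2`. -/
theorem mod_s_test_correctness {V : Type*} [Fintype V] [DecidableEq V]
    (s : ℕ) (hs : 2 ≤ s) (m : ℕ) (Λ : Fin m → Finset V)
    (hpd : ∀ i j : Fin m, i ≠ j → Disjoint (Λ i) (Λ j))
    (hcard : ∀ i : Fin m, (Λ i).card = s)
    (C : Finset V) :
    ((∀ i : Fin m, Λ i ⊆ C ∨ Disjoint (Λ i) C) →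
      ∀ c : Fin m → ZMod s,
        ∑ i : Fin m, ((Λ i ∩ C).card : ZMod s) * c i = 0) ∧
    ((∃ i : Fin m, 0 < (Λ i ∩ C).card ∧ (Λ i ∩ C).card < s) →
      ((Finset.univ.filter (fun b : Fin m → Bool =>
            ∑ i : Fin m, ((Λ i ∩ C).card : ZMod s) * (if b i then 1 else 0) = 0)).card : ℝ) /
          ((Finset.univ : Finset (Fin m → Bool)).card : ℝ) ≤ 1 / 2) :=
  mod_s_test_correctness_general s m Λ hcard C
end
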